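/- For de Sitter space, the wedge W_R ∩ dS^d = { x ∈ dS^d : x₁ > |x₀| } coincides with the order-convex hull of the boost geodesic γ(t) = cosh(t)e₁ + sinh(t)e₀: for every x ∈ dS^d with x₁ > |x₀| there exist s < t with γ(s) ≤ x ≤ γ(t), where y ≤ z means z - y lies in the closed future cone { v : v₀ ≥ 0, v₀² ≥ v₁² + ⋯ + v_d² }. -/

import Mathlib

/-!
Write `β` for the Minkowski form, so that `x ∈ dS^d` means `β x x = -1`; the boost geodesic `γ` also
lies on `dS^d`. Hence `β (x - γ u) (x - γ u) = 2 (x₁ cosh u - x₀ sinh u) - 2`, and since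
`|x₀ sinh u| ≤ |x₀| cosh u` this is nonnegative as soon as `(x₁ - |x₀|) cosh u ≥ 1`. Taking `M > 0`
with `sinh M ≥ |x₀|` and `cosh M ≥ 1 / (x₁ - |x₀|)`, the points `γ (-M)` and `γ M` lie in the past
and the future of `x` respectively.
-/

open Real

namespace Minkowski

variable {n : ℕ}

def form (x y : Fin (n + 1) → ℝ) : ℝ :=
  x 0 * y 0 - ∑ i : Fin n, x i.succ * y i.succ

theorem form_comm (x y : Fin (n + 1) → ℝ) : form x y = form y x := by
  simp only [form, mul_comm]

theorem form_sub_sub (x y : Fin (n + 1) → ℝ) :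
    form (x - y) (x - y) = form x x + form y y - 2 * form x y := by
  have h : ∀ i, (x - y) i * (x - y) i = x i * x i + y i * y i - 2 * (x i * y i) := fun i => by
    simp only [Pi.sub_apply]; ring
  simp only [form, h, Finset.sum_sub_distrib, Finset.sum_add_distrib, ← Finset.mul_sum]
  ring

theorem form_sub_sub_comm (x y : Fin (n + 1) → ℝ) :
    form (y - x) (y - x) = form (x - y) (x - y) := by
  rw [form_sub_sub, form_sub_sub, form_comm y x]
  ring

noncomputable def boost (t : ℝ) : Fin (n + 2) → ℝ :=
  fun i => if i = 0 then sinh t else if i = 1 then cosh t else 0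

theorem boost_zero (t : ℝ) : boost (n := n) t 0 = sinh t := rfl

theorem boost_one (t : ℝ) : boost (n := n) t 1 = cosh t := by simp [boost]

theorem form_boost (x : Fin (n + 2) → ℝ) (t : ℝ) :
    form x (boost t) = x 0 * sinh t - x 1 * cosh t := by
  simp [form, boost, Fin.sum_univ_succ, Fin.succ_succ_ne_one]

theorem form_boost_self (t : ℝ) : form (boost (n := n) t) (boost t) = -1 := by
  rw [form_boost, boost_zero, boost_one]
  linear_combination -cosh_sq_sub_sinh_sq t

theorem form_sub_boost_of_mem_deSitter {x : Fin (n + 2) → ℝ} (hx : form x x = -1) (t : ℝ) :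
    form (x - boost t) (x - boost t) = 2 * (x 1 * cosh t - x 0 * sinh t) - 2 := by
  rw [form_sub_sub, hx, form_boost_self, form_boost]
  ring

end Minkowski

theorem abs_sinh_le_cosh (u : ℝ) : |sinh u| ≤ cosh u := by
  rw [abs_sinh, ← cosh_abs]
  exact (sinh_lt_cosh _).le

theorem one_le_mul_cosh_sub_mul_sinh {a b u : ℝ} (hab : |a| < b) (hu : 1 / (b - |a|) ≤ cosh u) :
    1 ≤ b * cosh u - a * sinh u := by
  have hba : 0 < b - |a| := by linarith
  have hsinh : a * sinh u ≤ |a| * cosh u := by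
    calc a * sinh u ≤ |a * sinh u| := le_abs_self _
      _ = |a| * |sinh u| := abs_mul _ _
      _ ≤ |a| * cosh u := mul_le_mul_of_nonneg_left (abs_sinh_le_cosh u) (abs_nonneg a)
  calc 1 = (b - |a|) * (1 / (b - |a|)) := by field_simp
    _ ≤ (b - |a|) * cosh u := mul_le_mul_of_nonneg_left hu hba.le
    _ ≤ b * cosh u - a * sinh u := by linarith

theorem exists_pos_le_sinh_le_cosh (a b : ℝ) : ∃ M, 0 < M ∧ a ≤ sinh M ∧ b ≤ cosh M := by
  set c := max (max a b) 1
  refine ⟨arsinh c, arsinh_pos_iff.mpr (by positivity), ?_, ?_⟩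
  · rw [sinh_arsinh]
    exact (le_max_left _ _).trans (le_max_left _ _)
  · calc b ≤ c := (le_max_right _ _).trans (le_max_left _ _)
      _ = sinh (arsinh c) := (sinh_arsinh c).symm
      _ ≤ cosh (arsinh c) := (sinh_lt_cosh _).le

/-- The wedge { x ∈ dS^d : x₁ > |x₀| } is contained in the order-convex hull of the boost
geodesic γ(t) = (sinh t, cosh t, 0, …, 0): for every such x there are s < t with
γ(s) ≤ x ≤ γ(t) in the causal order given by the closed future cone. -/
theorem deSitter_wedge_order_convex_hull (d : ℕ) (hd : 1 ≤ d) :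
    let Q : (Fin (d+1) → ℝ) → ℝ := fun x => (x 0)^2 - ∑ i : Fin d, (x i.succ)^2
    let γ : ℝ → (Fin (d+1) → ℝ) := fun t i =>
      if i = 0 then Real.sinh t else if i = 1 then Real.cosh t else 0
    ∀ x : Fin (d+1) → ℝ, Q x = -1 → |x 0| < x 1 →
      ∃ s t : ℝ, s < t ∧
        (0 ≤ (x - γ s) 0 ∧ 0 ≤ Q (x - γ s)) ∧
        (0 ≤ (γ t - x) 0 ∧ 0 ≤ Q (γ t - x)) := by
  obtain ⟨n, rfl⟩ : ∃ n, d = n + 1 := ⟨d - 1, by omega⟩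
  intro Q γ x hx hwedge
  have hQ : ∀ v, Q v = Minkowski.form v v := fun v => by simp only [Q, Minkowski.form, sq]
  have hγ : γ = Minkowski.boost := rfl
  rw [hQ] at hx
  obtain ⟨M, hM, hsinh, hcosh⟩ := exists_pos_le_sinh_le_cosh |x 0| (1 / (x 1 - |x 0|))
  have hcausal : ∀ u, cosh u = cosh M → 0 ≤ Q (x - γ u) := fun u hu => by
    rw [hQ, hγ, Minkowski.form_sub_boost_of_mem_deSitter hx]
    linarith [one_le_mul_cosh_sub_mul_sinh hwedge (hcosh.trans_eq hu.symm)]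
  refine ⟨-M, M, by linarith, ⟨?_, hcausal (-M) (cosh_neg M)⟩, ⟨?_, ?_⟩⟩
  · simp only [hγ, Pi.sub_apply, Minkowski.boost_zero, sinh_neg]
    linarith [neg_abs_le (x 0)]
  · simp only [hγ, Pi.sub_apply, Minkowski.boost_zero]
    linarith [le_abs_self (x 0)]
  · rw [hQ, Minkowski.form_sub_sub_comm, ← hQ]
    exact hcausal M rfl
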